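/- arXiv:2006.02414 — 4 statements merged into one kernel-verified Lean document; each statement's English description precedes it below -/
import Mathlib

section
/- Any two nonabelian free groups (of possibly different ranks, each at least 2, possibly infinite) satisfy the same universal sentences in the language of groups. -/
open FirstOrder Language

/-- Function symbols of the first-order language of groups:
binary multiplication, unary inverse, and a constant for the identity. -/
inductive GroupFunc : ℕ → Type
  | mul : GroupFunc 2
  | inv : GroupFunc 1
  | one : GroupFunc 0

/-- The first-order language of groups. -/
def Lgroup : FirstOrder.Language := ⟨GroupFunc, fun _ => Empty⟩

/-- Every group is a structure in the language of groups. -/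
noncomputable instance (G : Type*) [Group G] : Lgroup.Structure G where
  funMap := fun f v =>
    match f with
    | .mul => v 0 * v 1
    | .inv => (v 0)⁻¹
    | .one => 1
  RelMap := fun r => r.elim

/-- A universal sentence is one of the form `∀ x₁ ... ∀ xₙ, φ` with `φ` quantifier-free. -/
def IsUniversalSentence (σ : Lgroup.Sentence) : Prop :=
  ∃ (n : ℕ) (φ : Lgroup.BoundedFormula Empty n), φ.IsQF ∧ σ = φ.alls


/-! A universal sentence true in `H` is true in every group all of whose finitely generated
subgroups embed in `H`, since it only speaks about finitely many elements at a time. A finitely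
generated subgroup of a free group lies in the free group on finitely many of its generators, and
a free group of countable rank embeds into any nonabelian free group: by ping-pong, the conjugates
`a ^ i * b * a ^ (-i)` of one generator by powers of another are a free basis of their span. -/

section PingPong

open scoped Pointwise Function

theorem Equiv.Perm.exists_mapsTo {α : Type*} [Countable α] {s t : Set α} (hs : s.Infinite)
    (hsc : sᶜ.Infinite) (ht : t.Infinite) (htc : tᶜ.Infinite) :
    ∃ q : Equiv.Perm α, Set.MapsTo q s t := by
  classical
  have := hs.to_subtype; have := hsc.to_subtype; have := ht.to_subtype; have := htc.to_subtype
  obtain ⟨e⟩ : Nonempty (s ≃ t) := nonempty_equiv_of_countable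
  obtain ⟨e'⟩ : Nonempty (↥sᶜ ≃ ↥tᶜ) := nonempty_equiv_of_countable
  refine ⟨Equiv.subtypeCongr e e', fun x hx => ?_⟩
  simp [Equiv.subtypeCongr, Equiv.sumCompl, hx]

theorem FreeGroup.injective_lift_conj_of_ping_pong {G : Type} {α : Type*} [Group G]
    [MulAction G α] (p q : G) {A B : Set α} (hA : A.Nonempty)
    (hAA : Pairwise (Disjoint on fun i : ℤ => p ^ i • A))
    (hBB : Pairwise (Disjoint on fun i : ℤ => p ^ i • B))
    (hAB : ∀ i j : ℤ, Disjoint (p ^ i • A) (p ^ j • B)) (hq : q • Bᶜ ⊆ A) :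
    Function.Injective (FreeGroup.lift fun i : ℤ => p ^ i * q * p ^ (-i)) := by
  have hq' : q⁻¹ • Aᶜ ⊆ B := by
    rw [Set.smul_set_compl, Set.compl_subset_comm, ← Set.smul_set_subset_iff_subset_inv_smul_set]
    exact hq
  refine FreeGroup.injective_lift_of_ping_pong _ (fun i => p ^ i • A) (fun i => p ^ i • B)
    (fun i => hA.smul_set) hAA hBB hAB (fun i => ?_) (fun i => ?_)
  · simp only [← Set.smul_set_compl, mul_smul, zpow_neg, inv_smul_smul]
    exact Set.smul_set_mono hq
  · simp only [Pi.inv_apply, mul_inv_rev, inv_inv, ← Set.smul_set_compl, mul_smul, zpow_neg,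
      inv_smul_smul, ← mul_assoc]
    exact Set.smul_set_mono hq'

def shiftFst : Equiv.Perm (ℤ × ℤ) := Equiv.addRight (1, 0)

theorem shiftFst_zpow_smul_singleton_prod (i : ℤ) (s : Set ℤ) :
    shiftFst ^ i • ({0} ×ˢ s) = {i} ×ˢ s := by
  ext ⟨x, y⟩
  simp [shiftFst, Set.mem_smul_set, eq_comm, and_comm]

theorem Set.Infinite.singleton_prod {α β : Type*} (a : α) {s : Set β} (hs : s.Infinite) :
    ({a} ×ˢ s).Infinite := by
  rw [Set.singleton_prod]
  exact hs.image (Prod.mk_right_injective a).injOn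

theorem exists_perm_injective_lift_shiftFst_conj : ∃ q : Equiv.Perm (ℤ × ℤ),
    Function.Injective (FreeGroup.lift fun i : ℤ => shiftFst ^ i * q * shiftFst ^ (-i)) := by
  set A : Set (ℤ × ℤ) := {0} ×ˢ Set.Ioi 0
  set B : Set (ℤ × ℤ) := {0} ×ˢ Set.Iio 0
  have hAB : Disjoint A B := Set.disjoint_prod.2 (Or.inr Set.Ioi_disjoint_Iio_same)
  have hA : A.Infinite := (Set.Ioi_infinite 0).singleton_prod 0
  have hB : B.Infinite := (Set.Iio_infinite 0).singleton_prod 0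
  obtain ⟨q, hq⟩ := Equiv.Perm.exists_mapsTo (s := Bᶜ) (hA.mono hAB.subset_compl_right)
    (by simpa using hB) hA (hB.mono hAB.subset_compl_left)
  refine ⟨q, FreeGroup.injective_lift_conj_of_ping_pong shiftFst q (B := B) hA.nonempty
    ?_ ?_ ?_ ?_⟩
  · intro i j hij
    simp only [Function.onFun, A, shiftFst_zpow_smul_singleton_prod]
    exact Set.disjoint_prod.2 (Or.inl (Set.disjoint_singleton.2 hij))
  · intro i j hij
    simp only [Function.onFun, B, shiftFst_zpow_smul_singleton_prod]
    exact Set.disjoint_prod.2 (Or.inl (Set.disjoint_singleton.2 hij))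
  · intro i j
    simp only [A, B, shiftFst_zpow_smul_singleton_prod]
    exact Set.disjoint_prod.2 (Or.inr Set.Ioi_disjoint_Iio_same)
  · rw [← Set.image_smul]
    exact hq.image_subset

end PingPong

theorem MonoidHom.exists_injective_of_le_range {G H : Type*} [Group G] [Group H] {f : G →* H}
    (hf : Function.Injective f) {K : Subgroup H} (hK : K ≤ f.range) :
    ∃ g : K →* G, Function.Injective g :=
  ⟨(MonoidHom.ofInjective hf).symm.toMonoidHom.comp (Subgroup.inclusion hK),
    (MonoidHom.ofInjective hf).symm.injective.comp (Subgroup.inclusion_injective hK)⟩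

namespace FreeGroup

theorem injective_lift_conj {T : Type*} {a b : T} (hab : a ≠ b) :
    Function.Injective (lift fun i : ℤ => of a ^ i * of b * of a ^ (-i)) := by
  classical
  obtain ⟨q, hq⟩ := exists_perm_injective_lift_shiftFst_conj
  let φ : FreeGroup T →* Equiv.Perm (ℤ × ℤ) := lift fun t => if t = a then shiftFst else q
  have hφ : φ.comp (lift fun i : ℤ => of a ^ i * of b * of a ^ (-i)) =
      lift fun i : ℤ => shiftFst ^ i * q * shiftFst ^ (-i) :=
    ext_hom _ _ fun i => by simp [φ, hab.symm]
  refine Function.Injective.of_comp (f := φ) ?_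
  rw [← MonoidHom.coe_comp, hφ]
  exact hq

theorem exists_injective_of_countable (ι : Type*) [Countable ι] {T : Type*} {a b : T}
    (hab : a ≠ b) : ∃ f : FreeGroup ι →* FreeGroup T, Function.Injective f := by
  obtain ⟨e, he⟩ := Countable.exists_injective_nat ι
  exact ⟨(lift fun i : ℤ => of a ^ i * of b * of a ^ (-i)).comp (map fun i => (e i : ℤ)),
    (injective_lift_conj hab).comp (map_injective (Nat.cast_injective.comp he))⟩

theorem exists_finset_mem_closure {S : Type*} (x : FreeGroup S) :
    ∃ s : Finset S, x ∈ Subgroup.closure (of '' s) := by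
  have hdir : Directed (· ≤ ·) fun s : Finset S => Subgroup.closure (of '' (s : Set S)) :=
    Monotone.directed_le fun s t hst => Subgroup.closure_mono (Set.image_mono hst)
  have htop : (⨆ s : Finset S, Subgroup.closure (of '' (s : Set S))) = ⊤ := by
    rw [eq_top_iff, ← closure_range_of, Subgroup.closure_le]
    rintro _ ⟨a, rfl⟩
    exact Subgroup.mem_iSup_of_mem {a} (Subgroup.subset_closure (by simp))
  exact (Subgroup.mem_iSup_of_directed hdir).1 (htop ▸ Subgroup.mem_top x)

theorem exists_finset_le_range_map_of_fg {S : Type*} {K : Subgroup (FreeGroup S)} (hK : K.FG) :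
    ∃ s : Finset S, K ≤ (map ((↑) : s → S)).range := by
  classical
  obtain ⟨t, rfl⟩ := hK
  choose s hs using exists_finset_mem_closure (S := S)
  refine ⟨t.biUnion s, ?_⟩
  rw [range_map, Subtype.range_coe, Subgroup.closure_le]
  intro x hx
  have hsub : s x ⊆ t.biUnion s := Finset.subset_biUnion_of_mem s hx
  exact Subgroup.closure_mono (Set.image_mono (Finset.coe_subset.2 hsub)) (hs x)

theorem exists_injective_of_fg {S T : Type*} {a b : T} (hab : a ≠ b)
    {K : Subgroup (FreeGroup S)} (hK : K.FG) :
    ∃ f : K →* FreeGroup T, Function.Injective f := by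
  obtain ⟨s, hs⟩ := exists_finset_le_range_map_of_fg hK
  obtain ⟨g, hg⟩ :=
    MonoidHom.exists_injective_of_le_range (map_injective Subtype.val_injective) hs
  obtain ⟨f, hf⟩ := exists_injective_of_countable s hab
  exact ⟨f.comp g, hf.comp hg⟩

end FreeGroup

def MonoidHom.toLgroupEmbedding {G H : Type*} [Group G] [Group H] (f : G →* H)
    (hf : Function.Injective f) : Lgroup.Embedding G H where
  toFun := f
  inj' := hf
  map_fun' {n} fn v := by
    cases fn
    · exact map_mul f (v 0) (v 1)
    · exact map_inv f (v 0)
    · exact map_one f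

theorem FirstOrder.Language.BoundedFormula.IsQF.realize_comp_injective {G H : Type*} [Group G]
    [Group H] {n : ℕ} {φ : Lgroup.BoundedFormula Empty n} (hφ : φ.IsQF) (f : G →* H)
    (hf : Function.Injective f) (xs : Fin n → G) :
    φ.Realize default (f ∘ xs) ↔ φ.Realize default xs := by
  have := hφ.realize_embedding (f.toLgroupEmbedding hf) (v := default) (xs := xs)
  rwa [Subsingleton.elim (_ ∘ default) default] at this

theorem IsUniversalSentence.realize_of_forall_fg {G H : Type*} [Group G] [Group H]
    {σ : Lgroup.Sentence} (hσ : IsUniversalSentence σ)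
    (hemb : ∀ K : Subgroup G, K.FG → ∃ f : K →* H, Function.Injective f) (h : H ⊨ σ) :
    G ⊨ σ := by
  obtain ⟨n, φ, hφ, rfl⟩ := hσ
  rw [Sentence.Realize, BoundedFormula.realize_alls] at h ⊢
  intro xs
  let K := Subgroup.closure (Set.range xs)
  obtain ⟨f, hf⟩ := hemb K ⟨(Set.finite_range xs).toFinset, by simp [K]⟩
  let ys : Fin n → K := fun i => ⟨xs i, Subgroup.subset_closure ⟨i, rfl⟩⟩
  have hys : φ.Realize default ys := (hφ.realize_comp_injective f hf ys).1 (h _)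
  exact (hφ.realize_comp_injective K.subtype K.subtype_injective ys).2 hys

/-- Any two nonabelian free groups satisfy the same universal sentences. -/
theorem universal_theory_eq_of_free_nonabelian {S T : Type*}
    (hS : ∃ a b : S, a ≠ b) (hT : ∃ a b : T, a ≠ b) :
    {σ : Lgroup.Sentence | IsUniversalSentence σ ∧ FreeGroup S ⊨ σ} =
      {σ : Lgroup.Sentence | IsUniversalSentence σ ∧ FreeGroup T ⊨ σ} := by
  obtain ⟨s₁, s₂, hs⟩ := hS
  obtain ⟨t₁, t₂, ht⟩ := hT
  ext σ
  constructor
  · rintro ⟨hσ, h⟩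
    exact ⟨hσ, hσ.realize_of_forall_fg (fun _ => FreeGroup.exists_injective_of_fg hs) h⟩
  · rintro ⟨hσ, h⟩
    exact ⟨hσ, hσ.realize_of_forall_fg (fun _ => FreeGroup.exists_injective_of_fg ht) h⟩
end

section
/- Let F be a nonabelian free group and let G be a group satisfying every universal sentence true in F. Then any two elements a, b ∈ G with [a,b] ≠ 1 generate a free subgroup of rank 2. -/
/-!
In a free group, two non-commuting elements `x, y` generate a free group of rank two: by
Nielsen–Schreier `⟨x, y⟩` is free; counting homomorphisms to `ℤ/2` shows it has at most two
free generators, and it has at least two since it is not abelian. So `FreeGroup Bool → ⟨x, y⟩`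
is, up to isomorphism, a surjective endomorphism of `FreeGroup Bool`, hence injective, because
free groups are residually finite and finitely generated residually finite groups are Hopfian.

Hence for `w ≠ 1` the universal sentence `∀ x y, w(x, y) = 1 → [x, y] = 1` holds in every free
group, so it holds in `G`, and `[a, b] ≠ 1` forces `w(a, b) ≠ 1`.
-/

open FirstOrder Language
open scoped commutatorElement

open Function

theorem MonoidHom.finite_of_fg {G K : Type*} [Group G] [Group K] [Group.FG G] [Finite K] :
    Finite (G →* K) := by
  obtain ⟨α, _, π, hπ⟩ := Group.fg_iff_exists_freeGroup_hom_surjective_finite.mp ‹Group.FG G›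
  have : Finite (FreeGroup α →* K) := .of_equiv _ FreeGroup.lift
  exact .of_injective (fun ρ : G →* K => ρ.comp π) fun _ _ h => (MonoidHom.cancel_right hπ).mp h

theorem MonoidHom.injective_of_surjective_of_residuallyFinite {G : Type*} [Group G] [Group.FG G]
    [Group.ResiduallyFinite G] {φ : G →* G} (hφ : Surjective φ) : Injective φ := by
  rw [injective_iff_map_eq_one]
  refine fun g hg => Group.eq_one_iff_forall_finiteIndexNormalSubroup g fun N => ?_
  have := MonoidHom.finite_of_fg (G := G) (K := G ⧸ N.toSubgroup)
  obtain ⟨ρ, hρ⟩ := Finite.surjective_of_injective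
    (f := fun ρ : G →* G ⧸ N.toSubgroup => ρ.comp φ) (fun _ _ h => (MonoidHom.cancel_right hφ).mp h)
    (QuotientGroup.mk' N.toSubgroup)
  have hN : (g : G ⧸ N.toSubgroup) = 1 := by
    rw [← QuotientGroup.mk'_apply, ← hρ, MonoidHom.comp_apply, hg, map_one]
  exact (QuotientGroup.eq_one_iff g).mp hN

namespace FreeGroup

variable {α β : Type*}

theorem lift_mk_smul_of_forall_getElem {K X : Type*} [Group K] [MulAction K X] (f : α → K)
    (L : List (α × Bool)) (p : ℕ → X)
    (h : ∀ j (hj : j < L.length), cond L[j].2 (f L[j].1) (f L[j].1)⁻¹ • p (j + 1) = p j) :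
    lift f (mk L) • p L.length = p 0 := by
  induction L generalizing p with
  | nil => simp
  | cons x L ih =>
    have hL : lift f (mk L) • p (L.length + 1) = p 1 :=
      ih (fun j => p (j + 1)) fun j hj => h (j + 1) (by simpa using hj)
    rw [lift_mk, List.map_cons, List.prod_cons, ← lift_mk, mul_smul, List.length_cons, hL]
    exact h 0 (by simp)

theorem IsReduced.eq_of_getElem_fst_eq {L : List (α × Bool)} (hL : IsReduced L) {i j : ℕ}
    (hi : i < L.length) (hj : j < L.length) (hfst : L[i].1 = L[j].1) (b : Bool)
    (h : (if L[i].2 = b then i + 1 else i) = if L[j].2 = b then j + 1 else j) : i = j := by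
  by_contra hne
  wlog hlt : i < j generalizing i j
  · exact this hj hi hfst.symm h.symm (Ne.symm hne) (by omega)
  split_ifs at h with hib hjb <;> try omega
  subst h
  exact hjb ((List.IsChain.getElem hL i hj hfst).symm.trans hib)

theorem exists_perm_lift_ne_one {w : FreeGroup α} (hw : w ≠ 1) :
    ∃ (n : ℕ) (σ : α → Equiv.Perm (Fin n)), lift σ w ≠ 1 := by
  classical
  set L := w.toWord
  set n := L.length
  have hn : n ≠ 0 := by simpa [n, L] using hw
  let p : ℕ → Fin (n + 1) := Fin.ofNat (n + 1)
  have hp : ∀ i j, i ≤ n → j ≤ n → p i = p j → i = j := by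
    intro i j hi hj hij
    simpa [p, Fin.ext_iff, Nat.mod_eq_of_lt (Nat.lt_succ_of_le hi),
      Nat.mod_eq_of_lt (Nat.lt_succ_of_le hj)] using hij
  -- Let the `j`-th letter of `L` move `j + 1` to `j`, so that `w` moves `n` to `0`: `σ a` must send
  -- `j + 1 ↦ j` at each letter `(a, true)` and `j ↦ j + 1` at each letter `(a, false)`, and these
  -- prescriptions are injective because `L` is reduced.
  have hedge (a : α) (b : Bool) : Injective fun e : {j : Fin n // L[j].1 = a} =>
      p (if L[e.1].2 = b then e.1 + 1 else e.1) := fun e e' hee' =>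
    Subtype.ext <| Fin.ext <| isReduced_toWord.eq_of_getElem_fst_eq e.1.2 e'.1.2
      (e.2.trans e'.2.symm) b (hp _ _ (by split_ifs <;> omega) (by split_ifs <;> omega) hee')
  have hσ (a : α) : ∃ σ : Equiv.Perm (Fin (n + 1)), ∀ j (hj : j < n), L[j].1 = a →
      cond L[j].2 σ σ⁻¹ • p (j + 1) = p j := by
    obtain ⟨σ, hσ⟩ := Equiv.Perm.exists_extending_pair _ _ (hedge a true) (hedge a false)
    refine ⟨σ, fun j hj hja => ?_⟩
    have hj' : σ (p (if L[j].2 = true then j + 1 else j)) =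
        p (if L[j].2 = false then j + 1 else j) := hσ ⟨⟨j, hj⟩, hja⟩
    cases hb : L[j].2 <;>
      simp only [hb, if_true, if_false, Bool.false_eq_true, Bool.true_eq_false] at hj'
    · rw [cond_false, Equiv.Perm.smul_def, Equiv.Perm.inv_eq_iff_eq, hj']
    · rw [cond_true, Equiv.Perm.smul_def, hj']
  choose σ hσ using hσ
  have hpath := lift_mk_smul_of_forall_getElem σ L p fun j hj => hσ _ j hj rfl
  rw [mk_toWord] at hpath
  refine ⟨n + 1, σ, fun h1 => hn ?_⟩
  rw [h1, one_smul] at hpath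
  exact hp _ _ le_rfl (Nat.zero_le _) hpath

instance residuallyFinite : Group.ResiduallyFinite (FreeGroup α) :=
  Group.residuallyFinite_of_forall_exists_finite_monoidHom fun _ hw => by
    obtain ⟨n, σ, hσ⟩ := exists_perm_lift_ne_one hw
    exact ⟨Equiv.Perm (Fin n), _, inferInstance, lift σ, hσ⟩

theorem comp_lift_injective {K : Type*} [Group K] {f : FreeGroup α →* FreeGroup β}
    (hf : Surjective f) : Injective fun v : β → K => lift.symm ((lift v).comp f) :=
  fun _ _ h => lift.injective ((MonoidHom.cancel_right hf).mp (lift.symm.injective h))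

theorem finite_of_surjective [Finite α] {f : FreeGroup α →* FreeGroup β} (hf : Surjective f) :
    Finite β := by
  classical
  have : Finite (β → Multiplicative (ZMod 2)) := .of_injective _ (comp_lift_injective hf)
  exact .of_injective (fun b b' => if b' = b then Multiplicative.ofAdd (1 : ZMod 2) else 1)
    fun b b' h => by simpa using congrFun h b

theorem card_le_of_surjective [Finite α] {f : FreeGroup α →* FreeGroup β} (hf : Surjective f) :
    Nat.card β ≤ Nat.card α := by
  have := finite_of_surjective hf
  have := Nat.card_le_card_of_injective _ (comp_lift_injective (K := Multiplicative (ZMod 2)) hf)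
  rwa [Nat.card_fun, Nat.card_fun, Nat.pow_le_pow_iff_right (by simp)] at this

theorem commute_of_subsingleton [Subsingleton α] (u v : FreeGroup α) : Commute u v := by
  rcases isEmpty_or_nonempty α with hα | ⟨⟨a⟩⟩
  · rw [Subsingleton.elim u v]
  · have := uniqueOfSubsingleton a
    exact IsCyclic.commGroup.mul_comm u v

theorem lift_injective_of_not_commute {G : Type*} [Group G] [IsFreeGroup G] {f : Bool → G}
    (hf : ¬Commute (f true) (f false)) : Injective (lift f) := by
  set H := (lift f).range
  let e := IsFreeGroup.toFreeGroup H
  let π := e.toMonoidHom.comp (lift f).rangeRestrict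
  have hπ : Surjective π := e.surjective.comp (lift f).rangeRestrict_surjective
  have := finite_of_surjective hπ
  have hcard : Nat.card (IsFreeGroup.Generators H) = Nat.card Bool := by
    refine le_antisymm (card_le_of_surjective hπ) (not_lt.mp fun hlt => hf ?_)
    have : Subsingleton (IsFreeGroup.Generators H) :=
      Finite.card_le_one_iff_subsingleton.mp (by simp at hlt; omega)
    have hc := (commute_of_subsingleton (π (of true)) (π (of false))).map
      (H.subtype.comp e.symm.toMonoidHom)
    simp only [π, MonoidHom.comp_apply, MulEquiv.coe_toMonoidHom, MulEquiv.symm_apply_apply,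
      Subgroup.coe_subtype] at hc
    rwa [MonoidHom.coe_rangeRestrict, MonoidHom.coe_rangeRestrict, lift_apply_of,
      lift_apply_of] at hc
  obtain ⟨e₂⟩ := Finite.card_eq.mp hcard
  have hφ := MonoidHom.injective_of_surjective_of_residuallyFinite
    (φ := (freeGroupCongr e₂).toMonoidHom.comp π) ((freeGroupCongr e₂).surjective.comp hπ)
  rw [MonoidHom.coe_comp, MonoidHom.coe_comp] at hφ
  exact MonoidHom.rangeRestrict_injective_iff.mp hφ.of_comp.of_comp

theorem commute_of_lift_eq_one {G : Type*} [Group G] [IsFreeGroup G] {w : FreeGroup Bool}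
    (hw : w ≠ 1) {f : Bool → G} (hf : lift f w = 1) : Commute (f true) (f false) := by
  by_contra hc
  exact hw ((injective_iff_map_eq_one _).mp (lift_injective_of_not_commute hc) w hf)

end FreeGroup

namespace Lgroup

variable {α : Type*}

def wordTerm : List (α × Bool) → Lgroup.Term α
  | [] => Term.func (GroupFunc.one : Lgroup.Functions 0) ![]
  | (a, true) :: L => Term.func (GroupFunc.mul : Lgroup.Functions 2) ![Term.var a, wordTerm L]
  | (a, false) :: L => Term.func (GroupFunc.mul : Lgroup.Functions 2)
      ![Term.func (GroupFunc.inv : Lgroup.Functions 1) ![Term.var a], wordTerm L]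

theorem realize_wordTerm {G : Type*} [Group G] (f : α → G) (L : List (α × Bool)) :
    (wordTerm L).realize f = FreeGroup.lift f (FreeGroup.mk L) := by
  induction L with
  | nil => rfl
  | cons x L ih =>
    rw [FreeGroup.lift_mk, List.map_cons, List.prod_cons, ← FreeGroup.lift_mk, ← ih]
    obtain ⟨a, _ | _⟩ := x <;> rfl

def quasiIdentity {n : ℕ} (e : α ≃ Fin n) (L M : List (α × Bool)) : Lgroup.Sentence :=
  (((wordTerm L).relabel (Sum.inr ∘ e)).bdEqual (wordTerm []) ⟹
    ((wordTerm M).relabel (Sum.inr ∘ e)).bdEqual (wordTerm [])).alls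

theorem isUniversalSentence_quasiIdentity {n : ℕ} (e : α ≃ Fin n) (L M : List (α × Bool)) :
    IsUniversalSentence (quasiIdentity e L M) :=
  ⟨n, _, (BoundedFormula.IsAtomic.equal _ _).isQF.imp (BoundedFormula.IsAtomic.equal _ _).isQF,
    rfl⟩

theorem realize_quasiIdentity (G : Type*) [Group G] {n : ℕ} (e : α ≃ Fin n)
    (L M : List (α × Bool)) :
    G ⊨ quasiIdentity e L M ↔
      ∀ f : α → G, FreeGroup.lift f (FreeGroup.mk L) = 1 → FreeGroup.lift f (FreeGroup.mk M) = 1 := by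
  rw [quasiIdentity, Sentence.Realize, BoundedFormula.realize_alls]
  simp only [BoundedFormula.realize_imp, BoundedFormula.realize_bdEqual, Term.realize_relabel,
    realize_wordTerm, ← FreeGroup.one_eq_mk, map_one, ← Function.comp_assoc, Sum.elim_comp_inr]
  exact ⟨fun H f => by simpa [Function.comp_assoc] using H (f ∘ e.symm), fun H xs => H _⟩

end Lgroup

theorem free_rank_two_of_noncommuting_general {S : Type*}
    {G : Type*} [Group G]
    (h : ∀ σ : Lgroup.Sentence, IsUniversalSentence σ → FreeGroup S ⊨ σ → G ⊨ σ)
    (a b : G) (hab : ⁅a, b⁆ ≠ 1) :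
    Function.Injective
      (FreeGroup.lift (fun i : Bool => if i then a else b) : FreeGroup Bool →* G) := by
  rw [injective_iff_map_eq_one]
  intro w hw
  by_contra hw1
  let σ := Lgroup.quasiIdentity finTwoEquiv.symm w.toWord
    ⁅FreeGroup.of true, FreeGroup.of false⁆.toWord
  have hF : FreeGroup S ⊨ σ := by
    refine (Lgroup.realize_quasiIdentity _ _ _ _).mpr fun f hf => ?_
    rw [FreeGroup.mk_toWord] at hf ⊢
    simpa [map_commutatorElement, commutatorElement_eq_one_iff_commute] using
      FreeGroup.commute_of_lift_eq_one hw1 hf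
  have hG := (Lgroup.realize_quasiIdentity _ _ _ _).mp
    (h σ (Lgroup.isUniversalSentence_quasiIdentity _ _ _) hF) _ (by rwa [FreeGroup.mk_toWord])
  rw [FreeGroup.mk_toWord, map_commutatorElement, FreeGroup.lift_apply_of,
    FreeGroup.lift_apply_of] at hG
  exact hab hG

/-- In a group satisfying the universal theory of a nonabelian free group,
any two non-commuting elements generate a free subgroup of rank 2. -/
theorem free_rank_two_of_noncommuting {S : Type*} (hS : ∃ a b : S, a ≠ b)
    {G : Type*} [Group G]
    (h : ∀ σ : Lgroup.Sentence, IsUniversalSentence σ → FreeGroup S ⊨ σ → G ⊨ σ)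
    (a b : G) (hab : ⁅a, b⁆ ≠ 1) :
    Function.Injective
      (FreeGroup.lift (fun i : Bool => if i then a else b) : FreeGroup Bool →* G) :=
  free_rank_two_of_noncommuting_general h a b hab
end

section
/- Every group elementarily equivalent to a nonabelian free group is CSA in the following sense: for all elements x, y, if x ≠ 1 and x commutes with y⁻¹xy, then x commutes with y. -/
open FirstOrder Language
open scoped commutatorElement

/-!
Commuting elements `u, v` of a free group generate a subgroup that is free (Nielsen–Schreier)
and abelian, hence cyclic; so `x = z ^ m` and `y⁻¹ * x * y = z ^ n`. If `m ≠ n`, every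
homomorphism from `⟨z, y⟩` to a torsion-free abelian group kills `z`, so the free group `⟨z, y⟩`
does not surject onto `ℤ²` and must be cyclic too. Either way `x` commutes with `y`. Hence the
universal sentence `∀ x y, [x, y⁻¹xy] = 1 → [x, y] = 1` holds in every free group, and
elementary equivalence transfers it.
-/

open Subgroup

theorem MonoidHom.range_le_zpowers_of_conj_zpow {G A : Type*} [Group G] [CommGroup A]
    [IsMulTorsionFree A] (f : G →* A) {z y : G} {m n : ℤ}
    (hG : closure {z, y} = ⊤) (hmn : m ≠ n) (h : y⁻¹ * z ^ m * y = z ^ n) :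
    f.range ≤ zpowers (f y) := by
  have hz : f z = 1 := by
    have hmn' : f z ^ m = f z ^ n := by simpa using congrArg f h
    rwa [← IsMulTorsionFree.zpow_eq_one_iff_left (sub_ne_zero.mpr hmn), zpow_sub,
      mul_inv_eq_one]
  rw [MonoidHom.range_eq_map, ← hG, MonoidHom.map_closure, Set.image_pair, hz, closure_le]
  rintro _ (rfl | rfl)
  · exact one_mem _
  · exact mem_zpowers _

namespace IsFreeGroup

variable {G : Type*} [Group G] [IsFreeGroup G]

theorem not_commute_of_ne {a b : Generators G} (hab : a ≠ b) : ¬Commute (of a) (of b) := by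
  have hswap : ¬Commute (Equiv.swap (0 : Fin 3) 1) (Equiv.swap 1 2) := by
    unfold Commute SemiconjBy; decide
  classical
  intro hc
  let f : G →* Equiv.Perm (Fin 3) := lift fun x => if x = a then Equiv.swap 0 1 else Equiv.swap 1 2
  have hf := hc.map f
  simp only [f, lift_of, if_true, if_neg hab.symm] at hf
  exact hswap hf

theorem exists_surjective_int_prod {a b : Generators G} (hab : a ≠ b) :
    ∃ f : G →* Multiplicative ℤ × Multiplicative ℤ, Function.Surjective f := by
  classical
  let f : G →* Multiplicative ℤ × Multiplicative ℤ :=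
    lift fun x => (if x = a then .ofAdd 1 else 1, if x = b then .ofAdd 1 else 1)
  refine ⟨f, fun ⟨p, q⟩ => ⟨of a ^ p.toAdd * of b ^ q.toAdd, ?_⟩⟩
  simp [f, hab, hab.symm, ← ofAdd_zsmul]

theorem isCyclic_of_subsingleton_generators [Subsingleton (Generators G)] : IsCyclic G := by
  rw [(toFreeGroup G).isCyclic]
  cases isEmpty_or_nonempty (Generators G)
  · infer_instance
  · have := uniqueOfSubsingleton (Classical.arbitrary (Generators G))
    infer_instance

theorem isCyclic_of_isMulCommutative [IsMulCommutative G] : IsCyclic G := by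
  have : Subsingleton (Generators G) :=
    ⟨fun a b => by_contra fun hab => not_commute_of_ne hab (mul_comm' _ _)⟩
  exact isCyclic_of_subsingleton_generators

theorem isCyclic_of_conj_zpow {z y : G} {m n : ℤ} (hG : closure {z, y} = ⊤) (hmn : m ≠ n)
    (h : y⁻¹ * z ^ m * y = z ^ n) : IsCyclic G := by
  have : Subsingleton (Generators G) := by
    refine ⟨fun a b => by_contra fun hab => ?_⟩
    obtain ⟨f, hf⟩ := exists_surjective_int_prod hab
    have hrange := f.range_le_zpowers_of_conj_zpow hG hmn h
    refine not_isCyclic_prod_of_infinite_nontrivial _ _ ⟨f y, fun t => ?_⟩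
    obtain ⟨g, rfl⟩ := hf t
    exact hrange ⟨g, rfl⟩
  exact isCyclic_of_subsingleton_generators

theorem exists_zpow_eq_zpow_of_commute {u v : G} (h : Commute u v) :
    ∃ (z : G) (m n : ℤ), u = z ^ m ∧ v = z ^ n := by
  -- `K` is free by Nielsen–Schreier (`subgroupIsFreeOfIsFree`).
  let K := closure {u, v}
  have : IsMulCommutative K := isMulCommutative_closure <| by
    rintro _ (rfl | rfl) _ (rfl | rfl) <;> first | rfl | exact h.eq | exact h.eq.symm
  have : IsCyclic K := isCyclic_of_isMulCommutative
  obtain ⟨g, hg⟩ := IsCyclic.exists_generator (α := K)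
  obtain ⟨m, hm⟩ := hg ⟨u, subset_closure (by simp)⟩
  obtain ⟨n, hn⟩ := hg ⟨v, subset_closure (by simp)⟩
  exact ⟨g, m, n, by simpa using congrArg Subtype.val hm.symm,
    by simpa using congrArg Subtype.val hn.symm⟩

theorem commute_zpow_of_conj_zpow {z y : G} {m n : ℤ} (h : y⁻¹ * z ^ m * y = z ^ n) :
    Commute (z ^ m) y := by
  obtain rfl | hmn := eq_or_ne m n
  · show z ^ m * y = y * z ^ m
    nth_rewrite 2 [← h]
    group
  let K := closure {z, y}
  let z' : K := ⟨z, subset_closure (by simp)⟩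
  let y' : K := ⟨y, subset_closure (by simp)⟩
  have hK : closure {z', y'} = ⊤ := by
    convert closure_closure_coe_preimage (k := {z, y})
    ext ⟨w, hw⟩
    simp [z', y', Subtype.ext_iff]
  have : IsCyclic K := isCyclic_of_conj_zpow hK hmn (Subtype.ext (by simpa using h))
  have hzy : Commute z y := congrArg Subtype.val (mul_comm' z' y')
  exact hzy.zpow_left m

theorem commute_of_commute_conj {x y : G} (h : Commute x (y⁻¹ * x * y)) : Commute x y := by
  obtain ⟨z, m, n, rfl, hconj⟩ := exists_zpow_eq_zpow_of_commute h
  exact commute_zpow_of_conj_zpow hconj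

end IsFreeGroup

namespace Lgroup

def mulTerm {α : Type*} (t₁ t₂ : Lgroup.Term α) : Lgroup.Term α :=
  Term.func (GroupFunc.mul : Lgroup.Functions 2) ![t₁, t₂]

def invTerm {α : Type*} (t : Lgroup.Term α) : Lgroup.Term α :=
  Term.func (GroupFunc.inv : Lgroup.Functions 1) ![t]

variable {G : Type*} [Group G] {α : Type*} (v : α → G)

@[simp]
theorem realize_mulTerm (t₁ t₂ : Lgroup.Term α) :
    (mulTerm t₁ t₂).realize v = t₁.realize v * t₂.realize v :=
  rfl

@[simp]
theorem realize_invTerm (t : Lgroup.Term α) : (invTerm t).realize v = (t.realize v)⁻¹ :=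
  rfl

def csaSentence : Lgroup.Sentence :=
  let x : Lgroup.Term (Empty ⊕ Fin 2) := Term.var (Sum.inr 0)
  let y : Lgroup.Term (Empty ⊕ Fin 2) := Term.var (Sum.inr 1)
  let w := mulTerm (mulTerm (invTerm y) x) y
  (Term.bdEqual (mulTerm x w) (mulTerm w x) ⟹ Term.bdEqual (mulTerm x y) (mulTerm y x)).all.all

theorem realize_csaSentence :
    G ⊨ csaSentence ↔ ∀ x y : G, Commute x (y⁻¹ * x * y) → Commute x y := by
  simp [csaSentence, Sentence.Realize, Formula.Realize, Commute, SemiconjBy, Fin.snoc]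

end Lgroup

theorem csa_of_elementarilyEquivalent_free_general {S : Type*}
    {M : Type*} [Group M] (h : M ≅[Lgroup] FreeGroup S) :
    ∀ x y : M, x ≠ 1 → ⁅x, y⁻¹ * x * y⁆ = 1 → ⁅x, y⁆ = 1 := by
  have hM : M ⊨ Lgroup.csaSentence := (h.realize_sentence _).mpr <|
    Lgroup.realize_csaSentence.mpr fun _ _ => IsFreeGroup.commute_of_commute_conj
  intro x y _ hxy
  rw [commutatorElement_eq_one_iff_commute] at hxy ⊢
  exact Lgroup.realize_csaSentence.mp hM x y hxy

/-- Every group elementarily equivalent to a nonabelian free group is CSA: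
if `x ≠ 1` commutes with `y⁻¹ * x * y`, then `x` commutes with `y`. -/
theorem csa_of_elementarilyEquivalent_free {S : Type*} (hS : ∃ a b : S, a ≠ b)
    {M : Type*} [Group M] (h : M ≅[Lgroup] FreeGroup S) :
    ∀ x y : M, x ≠ 1 → ⁅x, y⁻¹ * x * y⁆ = 1 → ⁅x, y⁆ = 1 :=
  csa_of_elementarilyEquivalent_free_general h
end

section
/- In a free group, the centralizer of any nontrivial element is infinite cyclic. -/
/-!
By Nielsen–Schreier the centralizer of `g` is itself a free group, and `g` is a nontrivial element
of its center. A free group with a nontrivial central element has exactly one generator: an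
element commuting with a generator `a` is a power of `a` (compare the reduced words of `a * z`
and `z * a`), and distinct generators have no common nontrivial power.
-/

theorem List.eq_replicate_of_cons_eq_append_singleton {α : Type*} {c : α} {l : List α}
    (h : c :: l = l ++ [c]) : l = List.replicate l.length c := by
  have : Nonempty α := ⟨c⟩
  obtain ⟨d, hd⟩ := List.rotate_one_eq_self_iff_eq_replicate.1
    (by rw [List.rotate_cons_succ, List.rotate_zero, h] : (c :: l).rotate 1 = c :: l)
  rw [List.length_cons, List.replicate_succ, List.cons.injEq] at hd
  rw [hd.1]
  exact hd.2

namespace FreeGroup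

variable {α : Type*}

section Words

variable [DecidableEq α]

theorem toWord_mk_singleton_mul {x : α × Bool} {z : FreeGroup α}
    (h : ∀ y ∈ z.toWord.head?, x.1 = y.1 → x.2 = y.2) :
    (mk [x] * z).toWord = x :: z.toWord := by
  rw [← mk_toWord (x := z), mul_mk, toWord_mk, mk_toWord]
  exact IsReduced.reduce_eq (List.isChain_cons.2 ⟨h, isReduced_toWord⟩)

theorem mem_zpowers_mk_singleton_of_commute {x : α × Bool} {z : FreeGroup α}
    (hz : Commute z (mk [x])) (h : ∀ y ∈ z.toWord.head?, x.1 = y.1 → x.2 = y.2) :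
    z ∈ Subgroup.zpowers (mk [x]) := by
  -- `x :: z.toWord` is reduced, and the reduced word of `z * mk [x]` is a sublist of
  -- `z.toWord ++ [x]`; commuting makes the two words equal.
  have hsub := toWord_mul_sublist z (mk [x])
  rw [hz.eq, toWord_mk_singleton_mul h, toWord_mk, reduce_singleton] at hsub
  have hword := List.eq_replicate_of_cons_eq_append_singleton (hsub.eq_of_length (by simp))
  rw [← mk_toWord (x := z), hword, ← List.flatten_replicate_singleton, ← pow_mk]
  exact Subgroup.npow_mem_zpowers _ _

end Words

theorem mem_zpowers_of_commute_of {a : α} {z : FreeGroup α} (hz : Commute z (of a)) :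
    z ∈ Subgroup.zpowers (of a) := by
  classical
  by_cases hhead : (a, false) ∈ z.toWord.head?
  · rw [← Subgroup.zpowers_inv]
    refine mem_zpowers_mk_singleton_of_commute (x := (a, false)) hz.inv_right ?_
    intro y hy _
    rw [Option.mem_unique hy hhead]
  · refine mem_zpowers_mk_singleton_of_commute (x := (a, true)) hz ?_
    rintro ⟨b, _ | _⟩ hy (rfl : a = b)
    · exact absurd hy hhead
    · rfl

theorem eq_one_of_commute_of_of_ne {a b : α} (hab : a ≠ b) {z : FreeGroup α}
    (ha : Commute z (of a)) (hb : Commute z (of b)) : z = 1 := by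
  classical
  obtain ⟨m, rfl⟩ := mem_zpowers_of_commute_of ha
  obtain ⟨k, hk⟩ := mem_zpowers_of_commute_of hb
  let count : FreeGroup α →* Multiplicative ℤ := lift (Pi.mulSingle a (.ofAdd 1))
  have hm : Multiplicative.ofAdd m = 1 := by
    simpa [count, Pi.mulSingle_eq_of_ne' hab, ← ofAdd_zsmul] using (congrArg count hk).symm
  simp [ofAdd_eq_one.1 hm]

theorem nonempty_mulEquiv_int_of_center_ne_bot (h : Subgroup.center (FreeGroup α) ≠ ⊥) :
    Nonempty (FreeGroup α ≃* Multiplicative ℤ) := by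
  obtain ⟨⟨z, hz⟩, hz1⟩ := Subgroup.ne_bot_iff_exists_ne_one.1 h
  have hz1 : z ≠ 1 := fun h1 => hz1 (Subtype.ext h1)
  have hcomm (a : α) : Commute z (of a) := (Subgroup.mem_center_iff.1 hz (of a)).symm
  have : Subsingleton α := ⟨fun a b => by_contra fun hab =>
    hz1 (eq_one_of_commute_of_of_ne hab (hcomm a) (hcomm b))⟩
  have : Nonempty α := by
    by_contra! hempty
    exact hz1 (Subsingleton.elim _ _)
  have : Unique α := uniqueOfSubsingleton (Classical.arbitrary α)
  exact ⟨mulEquivIntOfUnique⟩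

end FreeGroup

theorem IsFreeGroup.nonempty_mulEquiv_int_of_center_ne_bot {G : Type*} [Group G] [IsFreeGroup G]
    (h : Subgroup.center G ≠ ⊥) : Nonempty (G ≃* Multiplicative ℤ) := by
  obtain ⟨X, ⟨B⟩⟩ := IsFreeGroup.nonempty_basis (G := G)
  refine (FreeGroup.nonempty_mulEquiv_int_of_center_ne_bot ?_).map B.repr.trans
  obtain ⟨⟨z, hz⟩, hz1⟩ := Subgroup.ne_bot_iff_exists_ne_one.1 h
  refine Subgroup.ne_bot_iff_exists_ne_one.2
    ⟨⟨B.repr z, MulEquivClass.apply_mem_center B.repr hz⟩, fun h1 => hz1 ?_⟩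
  simpa using congrArg Subtype.val h1

/-- In a free group, the centralizer of any nontrivial element is infinite cyclic. -/
theorem centralizer_infinite_cyclic_of_free {S : Type*} (g : FreeGroup S) (hg : g ≠ 1) :
    Nonempty (Subgroup.centralizer ({g} : Set (FreeGroup S)) ≃* Multiplicative ℤ) := by
  set H := Subgroup.centralizer ({g} : Set (FreeGroup S))
  have hgH : g ∈ H := Subgroup.mem_centralizer_singleton_iff.2 rfl
  have hcentral : (⟨g, hgH⟩ : H) ∈ Subgroup.center H :=
    Subgroup.mem_center_iff.2 fun k => Subtype.ext (Subgroup.mem_centralizer_singleton_iff.1 k.2)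
  -- `H` is a free group by the Nielsen–Schreier instance `subgroupIsFreeOfIsFree`.
  exact IsFreeGroup.nonempty_mulEquiv_int_of_center_ne_bot <|
    Subgroup.ne_bot_iff_exists_ne_one.2 ⟨⟨_, hcentral⟩, fun h => hg (by simpa using h)⟩
end
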